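/- arXiv:1805.02154 — 10 statements merged into one kernel-verified Lean document; each statement's English description precedes it below -/
import Mathlib

section
/- The number of almost-permutations of a set of size n (maps f : Fin n → Fin n with exactly n-1 periodic points) is exactly (n-1)·n!. -/
open Function Equiv Set

lemma card_compl_singleton_aux (n : ℕ) (x : Fin n) :
    Nat.card ↥({x}ᶜ : Set (Fin n)) = n - 1 := by
  have := Set.ncard_add_ncard_compl ({x} : Set (Fin n))
  rw [Set.ncard_singleton, Nat.card_eq_fintype_card, Fintype.card_fin] at this
  rw [Nat.card_coe_set_eq]
  omega

lemma pow_fix_aux {n : ℕ} (σ : Equiv.Perm (Fin n)) {x : Fin n} (hx : σ x = x) (k : ℕ) :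
    (σ ^ k) x = x := by
  induction k with
  | zero => rfl
  | succ k ih => rw [pow_succ, Equiv.Perm.mul_apply, hx, ih]

lemma iterate_update_aux {n : ℕ} (σ : Equiv.Perm (Fin n)) {x y : Fin n}
    (hx : σ x = x) (k : ℕ) :
    ∀ z, z ≠ x → (Function.update ⇑σ x y)^[k] z = (σ ^ k) z := by
  induction k with
  | zero => intro z _; rfl
  | succ k ih =>
      intro z hz
      have h1 : Function.update ⇑σ x y z = σ z := Function.update_of_ne hz _ _
      have h2 : σ z ≠ x := fun h => hz (σ.injective (h.trans hx.symm))
      rw [Function.iterate_succ_apply, h1, ih _ h2, pow_succ, Equiv.Perm.mul_apply]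

/-- Key lemma: periodic points of `update σ x y` are exactly `{x}ᶜ`. -/
lemma periodicPts_update_aux {n : ℕ} (σ : Equiv.Perm (Fin n)) {x y : Fin n}
    (hx : σ x = x) (hy : y ≠ x) :
    Function.periodicPts (Function.update ⇑σ x y) = ({x}ᶜ : Set (Fin n)) := by
  ext z
  simp only [Set.mem_compl_iff, Set.mem_singleton_iff]
  constructor
  · rintro hz rfl
    obtain ⟨ℓ, hℓ, hfix⟩ := hz
    have h1 : Function.update ⇑σ z y z = y := Function.update_self _ _ _
    have h2 : (Function.update ⇑σ z y)^[(ℓ - 1) + 1] z = (σ ^ (ℓ - 1)) y := by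
      rw [Function.iterate_succ_apply, h1, iterate_update_aux σ hx _ _ hy]
    have hℓ' : (ℓ - 1) + 1 = ℓ := by omega
    rw [hℓ'] at h2
    have h3 : (σ ^ (ℓ - 1)) y ≠ z := fun h => hy (σ.symm.injective ?_)
    · exact h3 (h2 ▸ hfix)
    · have := pow_fix_aux σ hx (ℓ - 1)
      exact (σ ^ (ℓ - 1)).injective (h.trans this.symm) ▸ rfl
  · intro hz
    have hk : 0 < orderOf σ := orderOf_pos σ
    refine Function.mem_periodicPts.mpr ⟨orderOf σ, hk, ?_⟩
    show (Function.update ⇑σ x y)^[orderOf σ] z = z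
    rw [iterate_update_aux σ hx _ _ hz, pow_orderOf_eq_one]
    rfl

/-- Every almost-permutation decomposes as `update σ x y`. -/
lemma exists_decomp_aux {n : ℕ} (f : Fin n → Fin n)
    (hf : Nat.card (Function.periodicPts f) = n - 1) (hn : 1 ≤ n) :
    ∃ (σ : Equiv.Perm (Fin n)) (x y : Fin n), σ x = x ∧ y ≠ x ∧
      f = Function.update ⇑σ x y := by
  set S := Function.periodicPts f with hS
  have hcardS : S.ncard = n - 1 := by rw [← Nat.card_coe_set_eq, ← hf]
  have hcompl : Sᶜ.ncard = 1 := by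
    have := Set.ncard_add_ncard_compl S
    rw [Nat.card_eq_fintype_card, Fintype.card_fin, hcardS] at this
    omega
  obtain ⟨x, hx⟩ := Set.ncard_eq_one.mp hcompl
  have hSx : S = ({x}ᶜ : Set (Fin n)) := by rw [← hx, compl_compl]
  have hxS : x ∉ S := by rw [hSx]; simp
  have hbij := Function.bijOn_periodicPts f
  rw [← hS] at hbij
  have hyx : f x ≠ x := by
    intro h
    exact hxS (Function.mem_periodicPts.mpr ⟨1, one_pos, by simpa [Function.IsPeriodicPt,
      Function.IsFixedPt] using h⟩)
  classical
  set g : Fin n → Fin n := fun z => if z = x then x else f z with hg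
  have hmem : ∀ z, z ≠ x → z ∈ S := fun z hz => by rw [hSx]; simpa using hz
  have hfS : ∀ z, z ∈ S → f z ≠ x := by
    intro z hz h
    exact hxS (h ▸ hbij.mapsTo hz)
  have hginj : Function.Injective g := by
    intro a b hab
    simp only [hg] at hab
    by_cases ha : a = x <;> by_cases hb : b = x
    · rw [ha, hb]
    · rw [if_pos ha, if_neg hb] at hab
      exact absurd hab.symm (hfS b (hmem b hb))
    · rw [if_neg ha, if_pos hb] at hab
      exact absurd hab (hfS a (hmem a ha))
    · rw [if_neg ha, if_neg hb] at hab
      exact hbij.injOn (hmem a ha) (hmem b hb) hab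
  refine ⟨Equiv.ofBijective g (Finite.injective_iff_bijective.mp hginj), x, f x,
    if_pos rfl, hyx, ?_⟩
  funext z
  by_cases hz : z = x
  · rw [hz, Function.update_self]
  · rw [Function.update_of_ne hz]
    show f z = g z
    simp [hg, hz]

/-- The number of almost-permutations of a set of size `n` (maps `f : Fin n → Fin n`
with exactly `n-1` periodic points) is exactly `(n-1) * n!`. -/
theorem stmt_0 (n : ℕ) (hn : 1 ≤ n) :
    Nat.card {f : Fin n → Fin n // Nat.card (Function.periodicPts f) = n - 1} =
      (n - 1) * n.factorial := by
  classical
  set T := {p : Equiv.Perm (Fin n) × Fin n × Fin n // p.1 p.2.1 = p.2.1 ∧ p.2.2 ≠ p.2.1}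
    with hT
  have key : ∀ (σ : Equiv.Perm (Fin n)) (x y : Fin n), σ x = x → y ≠ x →
      Nat.card (Function.periodicPts (Function.update ⇑σ x y)) = n - 1 := by
    intro σ x y hx hy
    rw [periodicPts_update_aux σ hx hy, card_compl_singleton_aux]
  have Φbij : Function.Bijective (fun p : T =>
      (⟨Function.update ⇑p.1.1 p.1.2.1 p.1.2.2, key _ _ _ p.2.1 p.2.2⟩ :
        {f : Fin n → Fin n // Nat.card (Function.periodicPts f) = n - 1})) := by
    constructor
    · rintro ⟨⟨σ, x, y⟩, hx, hy⟩ ⟨⟨σ', x', y'⟩, hx', hy'⟩ h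
      simp only [Subtype.mk.injEq] at h
      have hP : ({x}ᶜ : Set (Fin n)) = ({x'}ᶜ : Set (Fin n)) := by
        rw [← periodicPts_update_aux σ hx hy, ← periodicPts_update_aux σ' hx' hy', h]
      have hxx : x = x' := by
        have := Set.ext_iff.mp (compl_injective hP) x
        simpa using this
      subst hxx
      have hyy : y = y' := by
        have := congrFun h x
        rwa [Function.update_self, Function.update_self] at this
      subst hyy
      have hσ : σ = σ' := by
        ext z
        by_cases hz : z = x
        · rw [hz, hx, hx']
        · have := congrFun h z
          rw [Function.update_of_ne hz, Function.update_of_ne hz] at this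
          exact congrArg Fin.val this
      subst hσ
      rfl
    · rintro ⟨f, hf⟩
      obtain ⟨σ, x, y, hx, hy, hfeq⟩ := exists_decomp_aux f hf hn
      exact ⟨⟨(σ, x, y), hx, hy⟩, Subtype.ext hfeq.symm⟩
  rw [← Nat.card_eq_of_bijective _ Φbij]
  -- Now count T
  have e : T ≃ (x : Fin n) × ({σ : Equiv.Perm (Fin n) // σ x = x} × {y : Fin n // y ≠ x}) :=
    { toFun := fun p => ⟨p.1.2.1, ⟨⟨p.1.1, p.2.1⟩, ⟨p.1.2.2, p.2.2⟩⟩⟩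
      invFun := fun q => ⟨(q.2.1.1, q.1, q.2.2.1), q.2.1.2, q.2.2.2⟩
      left_inv := by rintro ⟨⟨σ, x, y⟩, hx, hy⟩; rfl
      right_inv := by rintro ⟨x, ⟨σ, hσ⟩, ⟨y, hy⟩⟩; rfl }
  rw [Nat.card_congr e, Nat.card_eq_fintype_card, Fintype.card_sigma]
  have hfix : ∀ x : Fin n, Fintype.card {σ : Equiv.Perm (Fin n) // σ x = x} =
      (n - 1).factorial := by
    intro x
    have e2 : {σ : Equiv.Perm (Fin n) // σ x = x} ≃ Equiv.Perm {z : Fin n // z ≠ x} := by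
      refine ((Equiv.Perm.subtypeEquivSubtypePerm (fun z => z ≠ x)).trans
        (Equiv.subtypeEquivRight fun σ => ?_)).symm
      constructor
      · intro h; exact h x (by simp)
      · intro h a ha
        have : a = x := by simpa using ha
        rw [this, h]
    rw [Fintype.card_congr e2, Fintype.card_perm]
    congr 1
    rw [Fintype.card_subtype_compl, Fintype.card_fin, Fintype.card_subtype_eq]
  have hne : ∀ x : Fin n, Fintype.card {y : Fin n // y ≠ x} = n - 1 := by
    intro x
    rw [Fintype.card_subtype_compl, Fintype.card_fin, Fintype.card_subtype_eq]
  have : ∀ x : Fin n, Fintype.card ({σ : Equiv.Perm (Fin n) // σ x = x} ×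
      {y : Fin n // y ≠ x}) = (n - 1).factorial * (n - 1) := by
    intro x
    rw [Fintype.card_prod, hfix x, hne x]
  rw [Finset.sum_congr rfl fun x _ => this x, Finset.sum_const, Finset.card_univ,
    Fintype.card_fin, smul_eq_mul]
  obtain ⟨m, rfl⟩ := Nat.exists_eq_add_of_le hn
  simp only [Nat.add_sub_cancel_left]
  rw [Nat.add_comm 1 m, Nat.factorial_succ]
  ring
end

section
/- A map f : Fin n → Fin n is an almost-permutation (exactly n-1 periodic points) if and only if f is not a bijection and there exists a subset S of Fin n of size n-1 such that f maps S bijectively onto S. -/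
/-!
The periodic points of a self-map of a finite set form the largest set that `f` maps bijectively
onto itself, and they fill the whole set exactly when `f` is bijective.
-/

open Function Set

variable {α : Type*} {f : α → α}

theorem Set.InjOn.subset_periodicPts {S : Set α} (hS : S.Finite) (hinj : InjOn f S)
    (hmaps : MapsTo f S S) : S ⊆ periodicPts f := by
  have : Finite S := hS
  intro x hx
  have hsemiconj : Semiconj Subtype.val (hmaps.restrict f S S) f := fun _ => rfl
  exact hsemiconj.mapsTo_periodicPts
    ((hmaps.restrict_inj.mpr hinj).mem_periodicPts ⟨x, hx⟩)

theorem Function.ncard_periodicPts_lt_card_iff [Finite α] :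
    (periodicPts f).ncard < Nat.card α ↔ ¬ Bijective f := by
  rw [← Finite.injective_iff_bijective, injective_iff_periodicPts_eq_univ]
  refine ⟨fun hlt huniv => ?_, ncard_lt_card⟩
  rw [huniv, ncard_univ] at hlt
  exact hlt.false

theorem Function.ncard_periodicPts_eq_card_sub_one_iff [Finite α] (hα : 1 ≤ Nat.card α) :
    (periodicPts f).ncard = Nat.card α - 1 ↔
      ¬ Bijective f ∧ ∃ S : Finset α, S.card = Nat.card α - 1 ∧ BijOn f S S := by
  constructor
  · intro h
    refine ⟨ncard_periodicPts_lt_card_iff.mp (by omega), (toFinite (periodicPts f)).toFinset, ?_, ?_⟩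
    · rw [← h, ncard_eq_toFinset_card]
    · simpa using bijOn_periodicPts f
  · rintro ⟨hf, S, hS, hSf⟩
    have hle : S.card ≤ (periodicPts f).ncard := by
      rw [← ncard_coe_finset]
      exact ncard_le_ncard (hSf.injOn.subset_periodicPts S.finite_toSet hSf.mapsTo)
    have hlt := ncard_periodicPts_lt_card_iff.mpr hf
    omega

/-- `f : Fin n → Fin n` has exactly `n-1` periodic points iff `f` is not a bijection
and there is a subset `S` of size `n-1` that `f` maps bijectively onto itself. -/
theorem stmt_1 (n : ℕ) (hn : 1 ≤ n) (f : Fin n → Fin n) :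
    Nat.card (Function.periodicPts f) = n - 1 ↔
      ¬ Function.Bijective f ∧
        ∃ S : Finset (Fin n), S.card = n - 1 ∧ Set.BijOn f S S := by
  simpa [Nat.card_coe_set_eq] using
    ncard_periodicPts_eq_card_sub_one_iff (f := f) (by simpa using hn)
end

section
/- If f : Fin n → Fin n is an almost-permutation, then there is exactly one point of Fin n with no preimage under f, and this point is the unique non-periodic point of f. -/
open Function Set

namespace Function

variable {α : Type*} [Finite α] {f : α → α}

theorem exists_compl_periodicPts_eq_singleton
    (hf : Nat.card (periodicPts f) + 1 = Nat.card α) : ∃ y, (periodicPts f)ᶜ = {y} := by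
  have hsum := ncard_add_ncard_compl (periodicPts f)
  rw [← Nat.card_coe_set_eq] at hsum
  exact ncard_eq_one.mp (by omega)

/-- A non-periodic point in the range would make `f` surjective, hence a permutation of the
finite type `α`, all of whose points are periodic. -/
theorem range_eq_periodicPts_of_subsingleton_compl (hf : (periodicPts f)ᶜ.Subsingleton) :
    range f = periodicPts f := by
  refine (periodicPts_subset_range).antisymm' fun z hz => ?_
  by_contra hzper
  have hsurj : Surjective f := fun w => by
    by_cases hw : w ∈ periodicPts f
    · exact periodicPts_subset_range hw
    · rwa [hf hw hzper]
  exact hzper ((Finite.injective_iff_surjective.mpr hsurj).mem_periodicPts z)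

end Function

/-- If `f : Fin n → Fin n` is an almost-permutation (exactly `n-1` periodic points),
then there is exactly one point with no preimage under `f`, and this point is the
unique non-periodic point of `f`. -/
theorem stmt_2 (n : ℕ) (hn : 1 ≤ n) (f : Fin n → Fin n)
    (hf : Nat.card (Function.periodicPts f) = n - 1) :
    ∃ y : Fin n, (∀ z : Fin n, z ∉ Set.range f ↔ z = y) ∧
      (∀ z : Fin n, z ∉ Function.periodicPts f ↔ z = y) := by
  obtain ⟨y, hy⟩ := exists_compl_periodicPts_eq_singleton (f := f)
    (by rw [hf, Nat.card_fin]; omega)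
  have hnotMem (z : Fin n) : z ∉ periodicPts f ↔ z = y := by
    rw [← mem_compl_iff, hy, mem_singleton_iff]
  have hrange := range_eq_periodicPts_of_subsingleton_compl (hy ▸ subsingleton_singleton)
  exact ⟨y, fun z => hrange ▸ hnotMem z, hnotMem⟩
end

section
/- In a deterministic complete automaton, the stability relation (the relation relating p and q iff for every word u there is a word v with p·uv = q·uv) is an equivalence relation on the set of states. -/
/-- The stability relation of a deterministic complete automaton
(`p` and `q` are stable iff for every word `u` there is a word `v`
with `p·uv = q·uv`) is an equivalence relation on the states. -/
theorem stmt_4 {Q A : Type*} [Finite Q] (δ : Q → A → Q) :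
    Equivalence (fun p q : Q => ∀ u : List A, ∃ v : List A,
      (u ++ v).foldl δ p = (u ++ v).foldl δ q) := by
  constructor
  · intro p u; exact ⟨[], rfl⟩
  · intro p q h u
    obtain ⟨v, hv⟩ := h u
    exact ⟨v, hv.symm⟩
  · intro p q r hpq hqr u
    obtain ⟨v, hv⟩ := hpq u
    obtain ⟨w, hw⟩ := hqr (u ++ v)
    refine ⟨v ++ w, ?_⟩
    have h1 : (u ++ (v ++ w)).foldl δ p = (u ++ v ++ w).foldl δ p := by
      rw [List.append_assoc]
    have h2 : (u ++ (v ++ w)).foldl δ r = (u ++ v ++ w).foldl δ r := by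
      rw [List.append_assoc]
    simp only [List.foldl_append] at h1 h2 hv hw ⊢
    rw [hv, hw]
end

section
/- If S and T are two F-cliques of an automaton with S \ T = {p} and T \ S = {q}, then {p, q} is a stable pair. -/
/-- A subset all of whose pairs of distinct states are deadlocks. -/
def PairwiseDeadlock {Q A : Type*} (δ : Q → A → Q) (S : Finset Q) : Prop :=
  ∀ p ∈ S, ∀ q ∈ S, p ≠ q → ∀ u : List A, u.foldl δ p ≠ u.foldl δ q

/-- An F-clique: a pairwise-deadlock subset of maximum cardinality. -/
def IsFClique {Q A : Type*} (δ : Q → A → Q) (S : Finset Q) : Prop :=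
  PairwiseDeadlock δ S ∧ ∀ T : Finset Q, PairwiseDeadlock δ T → T.card ≤ S.card

/-- If `S` and `T` are two F-cliques with `S \ T = {p}` and `T \ S = {q}`,
then `{p, q}` is a stable pair. -/
theorem stmt_7 {Q A : Type*} [Fintype Q] [DecidableEq Q] (δ : Q → A → Q)
    (S T : Finset Q) (hS : IsFClique δ S) (hT : IsFClique δ T) (p q : Q)
    (hST : S \ T = {p}) (hTS : T \ S = {q}) :
    ∀ u : List A, ∃ v : List A, (u ++ v).foldl δ p = (u ++ v).foldl δ q := by
  intro u
  by_contra h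
  push_neg at h
  have hp : p ∈ S ∧ p ∉ T := by
    have : p ∈ S \ T := by rw [hST]; exact Finset.mem_singleton_self p
    exact Finset.mem_sdiff.mp this
  have hq : q ∈ T ∧ q ∉ S := by
    have : q ∈ T \ S := by rw [hTS]; exact Finset.mem_singleton_self q
    exact Finset.mem_sdiff.mp this
  set f : Q → Q := fun s => u.foldl δ s with hf
  have key : ∀ s ∈ S, ∀ v : List A, v.foldl δ (f s) ≠ v.foldl δ (f q) := by
    intro s hs v
    by_cases hsT : s ∈ T
    · have hsq : s ≠ q := fun e => hq.2 (e ▸ hs)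
      have := hT.1 s hsT q hq.1 hsq (u ++ v)
      simpa [List.foldl_append] using this
    · have hsp : s = p := by
        have : s ∈ S \ T := Finset.mem_sdiff.mpr ⟨hs, hsT⟩
        rw [hST] at this; simpa using this
      subst hsp
      have := h v
      simpa [List.foldl_append] using this
  have hnotmem : f q ∉ S.image f := by
    intro hm
    obtain ⟨s, hs, hse⟩ := Finset.mem_image.mp hm
    exact key s hs [] (by simpa using hse)
  have hinj : Set.InjOn f S := by
    intro a ha b hb hab
    by_contra hne
    exact hS.1 a ha b hb hne u hab
  set U : Finset Q := insert (f q) (S.image f) with hU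
  have hUcard : U.card = S.card + 1 := by
    rw [hU, Finset.card_insert_of_notMem hnotmem, Finset.card_image_of_injOn hinj]
  have hUpd : PairwiseDeadlock δ U := by
    intro a ha b hb hab v
    rw [hU, Finset.mem_insert] at ha hb
    rcases ha with ha | ha <;> rcases hb with hb | hb
    · exact absurd (ha.trans hb.symm) hab
    · obtain ⟨s, hs, rfl⟩ := Finset.mem_image.mp hb
      subst ha
      exact fun e => key s hs v e.symm
    · obtain ⟨s, hs, rfl⟩ := Finset.mem_image.mp ha
      subst hb
      exact key s hs v
    · obtain ⟨s, hs, rfl⟩ := Finset.mem_image.mp ha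
      obtain ⟨t, ht, rfl⟩ := Finset.mem_image.mp hb
      have hst : s ≠ t := fun e => hab (by rw [e])
      have := hS.1 s hs t ht hst (u ++ v)
      simpa [List.foldl_append] using this
  have := hS.2 U hUpd
  omega
end

section
/- The image of an F-clique under the action of any word is again an F-clique; in particular F-cliques all have the same cardinality and the action of any word on an F-clique is injective. -/
/-- The image of an F-clique under the action of any word is again an F-clique;
all F-cliques have the same cardinality, and words act injectively on F-cliques. -/
theorem stmt_8 {Q A : Type*} [Fintype Q] [DecidableEq Q] (δ : Q → A → Q)
    (S : Finset Q) (hS : IsFClique δ S) (w : List A) :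
    IsFClique δ (S.image fun q => w.foldl δ q) ∧
      (∀ T : Finset Q, IsFClique δ T → T.card = S.card) ∧
      Set.InjOn (fun q => w.foldl δ q) (S : Set Q) := by
  obtain ⟨hPD, hmax⟩ := hS
  have hinj : Set.InjOn (fun q => w.foldl δ q) (S : Set Q) := by
    intro p hp q hq h
    by_contra hne
    exact hPD p hp q hq hne w h
  have hPDimg : PairwiseDeadlock δ (S.image fun q => w.foldl δ q) := by
    intro p' hp' q' hq' hne u
    simp only [Finset.mem_image] at hp' hq'
    obtain ⟨p, hp, rfl⟩ := hp'
    obtain ⟨q, hq, rfl⟩ := hq'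
    have hpq : p ≠ q := by rintro rfl; exact hne rfl
    have := hPD p hp q hq hpq (w ++ u)
    simpa [List.foldl_append] using this
  have hcard : (S.image fun q => w.foldl δ q).card = S.card :=
    Finset.card_image_of_injOn hinj
  refine ⟨⟨hPDimg, fun T hT => hcard ▸ hmax T hT⟩, fun T hT =>
    le_antisymm (hmax T hT.1) (hT.2 S hPD), hinj⟩
end

section
/- If A is a strongly connected almost-group automaton, then its factor automaton by the stability relation is a strongly connected group automaton (every letter acts as a permutation of the stability classes). -/
def Stable {Q A : Type*} (δ : Q → A → Q) (p q : Q) : Prop :=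
  ∀ u : List A, ∃ v : List A, (u ++ v).foldl δ p = (u ++ v).foldl δ q

/-!
Every letter except `a₀` permutes `Q`, and `a₀` permutes `Q \ {p₀}` and sends `p₀` into it, so
for `K = |Q|!` the word `aᴷ` fixes every state, except that `a₀ᴷ` sends `p₀` to some `q₁`.
Modulo the congruence `ρ` each letter therefore has the inverse `aᴷ⁻¹` as soon as `p₀ ρ q₁`.

To see `p₀ ρ q₁`, take a positive weight `π` on `Q` that is stationary for the random walk applying
a uniformly chosen letter (it exists since `M - |D|·1` is singular, `M` being the transition count
matrix, and the absolute value of a kernel vector stays stationary), and a word `w` whose map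
maximises the strictly convex potential `∑ⱼ π(t⁻¹ j)²`. Stationarity says that the fibre masses
of `t ∘ a`, averaged over the letters, are those of `t`; by maximality and strict convexity, the
maps of all words `u w` then have the fibre masses of `w`. The maps of `u w` and `a₀ᴷ u w` differ
only at `p₀`, so equal fibre masses force `p₀·uw = q₁·uw`.
-/

open Finset Function

theorem List.foldl_replicate_eq_iterate {Q A : Type*} (δ : Q → A → Q) (a : A) (n : ℕ) (x : Q) :
    (List.replicate n a).foldl δ x = (δ · a)^[n] x := by
  induction n generalizing x with
  | zero => rfl
  | succ n ih => rw [List.replicate_succ, List.foldl_cons, ih, iterate_succ_apply]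

namespace Stable

variable {Q A : Type*} {δ : Q → A → Q} {p q r : Q}

theorem refl (δ : Q → A → Q) (p : Q) : Stable δ p p := fun _ => ⟨[], rfl⟩

theorem symm (h : Stable δ p q) : Stable δ q p := fun u => (h u).imp fun _ hv => hv.symm

theorem trans (hpq : Stable δ p q) (hqr : Stable δ q r) : Stable δ p r := by
  intro u
  obtain ⟨v, hv⟩ := hpq u
  obtain ⟨w, hw⟩ := hqr (u ++ v)
  refine ⟨v ++ w, ?_⟩
  rw [← List.append_assoc, List.foldl_append, hv, ← List.foldl_append, hw]

theorem foldl (h : Stable δ p q) (u : List A) : Stable δ (u.foldl δ p) (u.foldl δ q) := by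
  intro u'
  obtain ⟨v, hv⟩ := h (u ++ u')
  exact ⟨v, by simpa only [List.append_assoc, List.foldl_append] using hv⟩

theorem iterate (h : Stable δ p q) (a : A) (n : ℕ) :
    Stable δ ((δ · a)^[n] p) ((δ · a)^[n] q) := by
  simpa only [List.foldl_replicate_eq_iterate] using h.foldl (List.replicate n a)

theorem of_apply_of_iterate {a : A} {n : ℕ} (hret : ∀ x, Stable δ ((δ · a)^[n + 1] x) x)
    (h : Stable δ (δ p a) (δ q a)) : Stable δ p q := by
  have hpq := h.iterate a n
  rw [← iterate_succ_apply, ← iterate_succ_apply] at hpq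
  exact (hret p).symm.trans (hpq.trans (hret q))

theorem exists_apply_of_iterate {a : A} {n : ℕ} (hret : ∀ x, Stable δ ((δ · a)^[n + 1] x) x)
    (q : Q) : ∃ p, Stable δ (δ p a) q :=
  ⟨(δ · a)^[n] q, by simpa only [iterate_succ_apply'] using hret q⟩

end Stable

theorem Function.periodicPts_eq_compl_singleton {Q : Type*} [Finite Q] {f : Q → Q} {p : Q}
    (hcard : Nat.card (periodicPts f) = Nat.card Q - 1) (hp : p ∉ periodicPts f) :
    periodicPts f = {p}ᶜ := by
  refine Set.eq_of_subset_of_ncard_le (fun x hx => ?_) ?_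
  · rintro rfl; exact hp hx
  · rw [Set.ncard_compl, Set.ncard_singleton, ← Nat.card_coe_set_eq, hcard]

section FiberMass

variable {Q : Type*} [Fintype Q] [DecidableEq Q]

def fiberMass (π : Q → ℚ) (t : Q → Q) (j : Q) : ℚ := ∑ x with t x = j, π x

def fiberPotential (π : Q → ℚ) (t : Q → Q) : ℚ := ∑ j, fiberMass π t j ^ 2

/-- `π` is a stationary measure of the random walk applying a uniformly chosen map of `D`. -/
def IsStationaryWeight (D : Finset (Q → Q)) (π : Q → ℚ) : Prop :=
  ∀ q, ∑ d ∈ D, fiberMass π d q = #D * π q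

theorem fiberMass_comp (π : Q → ℚ) (t d : Q → Q) (j : Q) :
    fiberMass π (t ∘ d) j = ∑ q with t q = j, fiberMass π d q := by
  simp only [fiberMass, comp_apply]
  rw [← sum_fiberwise_of_maps_to (s := univ.filter fun x => t (d x) = j)
    (t := univ.filter fun q => t q = j) (g := d) (fun x hx => by simpa using hx)]
  refine sum_congr rfl fun q hq => sum_congr ?_ fun _ _ => rfl
  ext x
  simp only [mem_filter, mem_univ, true_and] at hq ⊢
  constructor
  · exact fun h => h.2
  · rintro rfl; exact ⟨hq, rfl⟩

theorem sum_fiberMass (π : Q → ℚ) (t : Q → Q) : ∑ j, fiberMass π t j = ∑ x, π x :=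
  sum_fiberwise univ t π

theorem fiberMass_nonneg {π : Q → ℚ} (hπ : ∀ x, 0 ≤ π x) (t : Q → Q) (j : Q) :
    0 ≤ fiberMass π t j :=
  sum_nonneg fun x _ => hπ x

theorem le_fiberMass_apply {π : Q → ℚ} (hπ : ∀ x, 0 ≤ π x) (t : Q → Q) (x : Q) :
    π x ≤ fiberMass π t (t x) :=
  single_le_sum (fun y _ => hπ y) (by simp)

theorem abs_fiberMass_le (π : Q → ℚ) (t : Q → Q) (j : Q) :
    |fiberMass π t j| ≤ fiberMass (|π ·|) t j :=
  abs_sum_le_sum_abs _ _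

namespace IsStationaryWeight

variable {D : Finset (Q → Q)} {π : Q → ℚ}

theorem sum_fiberMass_comp (hπ : IsStationaryWeight D π) (t : Q → Q) (j : Q) :
    ∑ d ∈ D, fiberMass π (t ∘ d) j = #D * fiberMass π t j := by
  simp only [fiberMass_comp]
  rw [sum_comm, fiberMass, mul_sum]
  exact sum_congr rfl fun q _ => hπ q

theorem abs (hπ : IsStationaryWeight D π) : IsStationaryWeight D (|π ·|) := by
  have hle : ∀ q ∈ univ, #D * |π q| ≤ ∑ d ∈ D, fiberMass (|π ·|) d q := fun q _ => by
    calc (#D : ℚ) * |π q| = |∑ d ∈ D, fiberMass π d q| := by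
          rw [hπ q, abs_mul, Nat.abs_cast]
      _ ≤ ∑ d ∈ D, |fiberMass π d q| := abs_sum_le_sum_abs _ _
      _ ≤ ∑ d ∈ D, fiberMass (|π ·|) d q := sum_le_sum fun d _ => abs_fiberMass_le π d q
  have htotal : ∑ q, #D * |π q| = ∑ q, ∑ d ∈ D, fiberMass (|π ·|) d q := by
    rw [sum_comm, ← mul_sum]
    simp only [sum_fiberMass, sum_const, nsmul_eq_mul]
  exact fun q => ((sum_eq_sum_iff_of_le hle).mp htotal q (mem_univ q)).symm

theorem pos_apply {x : Q} (hπ : IsStationaryWeight D π) (hnn : ∀ x, 0 ≤ π x) (hx : 0 < π x)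
    {d : Q → Q} (hd : d ∈ D) : 0 < π (d x) := by
  have : π x ≤ #D * π (d x) :=
    calc π x ≤ fiberMass π d (d x) := le_fiberMass_apply hnn d x
      _ ≤ ∑ d' ∈ D, fiberMass π d' (d x) :=
          single_le_sum (fun d' _ => fiberMass_nonneg hnn d' (d x)) hd
      _ = #D * π (d x) := hπ (d x)
  exact pos_of_mul_pos_right (hx.trans_le this) (Nat.cast_nonneg _)

theorem fiberMass_comp_eq_of_le (hπ : IsStationaryWeight D π) {t : Q → Q}
    (hmax : ∀ d ∈ D, fiberPotential π (t ∘ d) ≤ fiberPotential π t) {d : Q → Q} (hd : d ∈ D) :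
    fiberMass π (t ∘ d) = fiberMass π t := by
  have hcross : ∑ d ∈ D, ∑ j, 2 * fiberMass π (t ∘ d) j * fiberMass π t j
      = 2 * (#D * fiberPotential π t) := by
    rw [sum_comm, fiberPotential, mul_sum, mul_sum]
    refine sum_congr rfl fun j _ => ?_
    rw [← sum_mul, ← mul_sum, hπ.sum_fiberMass_comp]
    ring
  have hvar : ∑ d ∈ D, ∑ j, (fiberMass π (t ∘ d) j - fiberMass π t j) ^ 2
      = ∑ d ∈ D, fiberPotential π (t ∘ d) - #D * fiberPotential π t := by
    simp only [sub_sq, sum_add_distrib, sum_sub_distrib, hcross, fiberPotential, sum_const,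
      nsmul_eq_mul]
    ring
  have hle : ∑ d ∈ D, fiberPotential π (t ∘ d) ≤ #D * fiberPotential π t := by
    simpa only [nsmul_eq_mul] using sum_le_card_nsmul D _ _ hmax
  have hzero : ∑ d ∈ D, ∑ j, (fiberMass π (t ∘ d) j - fiberMass π t j) ^ 2 = 0 :=
    le_antisymm (by linarith) (by positivity)
  rw [sum_eq_zero_iff_of_nonneg fun _ _ => by positivity] at hzero
  have hzero_d := hzero d hd
  rw [sum_eq_zero_iff_of_nonneg fun _ _ => by positivity] at hzero_d
  exact funext fun j => sub_eq_zero.mp (pow_eq_zero_iff two_ne_zero |>.mp (hzero_d j (mem_univ j)))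

end IsStationaryWeight

theorem exists_isStationaryWeight_ne_zero [Nonempty Q] (D : Finset (Q → Q)) :
    ∃ π ≠ 0, IsStationaryWeight D π := by
  let M : Matrix Q Q ℚ := Matrix.of fun x q => #{d ∈ D | d x = q}
  have hM_one : M.mulVec (fun _ => 1) = fun _ => (#D : ℚ) := by
    ext x
    simp only [M, Matrix.mulVec, dotProduct, Matrix.of_apply, mul_one]
    exact_mod_cast
      (card_eq_sum_card_fiberwise (t := univ) fun (d : Q → Q) _ => mem_univ (d x)).symm
  have hvecMul_M : ∀ π q, Matrix.vecMul π M q = ∑ d ∈ D, fiberMass π d q := fun π q => by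
    simp only [M, Matrix.vecMul, dotProduct, Matrix.of_apply, fiberMass, card_filter,
      Nat.cast_sum, Nat.cast_ite, Nat.cast_one, Nat.cast_zero, mul_sum, mul_ite, mul_one, mul_zero,
      sum_filter]
    exact sum_comm
  have hdet : (M - (#D : ℚ) • 1).det = 0 := by
    refine Matrix.exists_mulVec_eq_zero_iff.mp ⟨fun _ => 1, ?_, ?_⟩
    · exact fun h => one_ne_zero (congrFun h (Classical.arbitrary Q))
    · rw [Matrix.sub_mulVec, hM_one, Matrix.smul_mulVec, Matrix.one_mulVec]
      ext; simp
  obtain ⟨π, hπ, hker⟩ := Matrix.exists_vecMul_eq_zero_iff.mpr hdet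
  rw [Matrix.vecMul_sub, Matrix.vecMul_smul, Matrix.vecMul_one, sub_eq_zero] at hker
  exact ⟨π, hπ, fun q => by rw [← hvecMul_M, hker]; rfl⟩

theorem exists_pos_isStationaryWeight [Nonempty Q] (D : Finset (Q → Q))
    (hD : ∀ x y, Relation.ReflTransGen (fun x y => ∃ d ∈ D, d x = y) x y) :
    ∃ π : Q → ℚ, (∀ x, 0 < π x) ∧ IsStationaryWeight D π := by
  obtain ⟨π, hπ0, hπ⟩ := exists_isStationaryWeight_ne_zero D
  obtain ⟨x, hx⟩ : ∃ x, π x ≠ 0 := by simpa [funext_iff] using hπ0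
  refine ⟨(|π ·|), fun y => ?_, hπ.abs⟩
  induction hD x y with
  | refl => exact abs_pos.mpr hx
  | tail _ hstep ih =>
    obtain ⟨d, hd, rfl⟩ := hstep
    exact hπ.abs.pos_apply (fun _ => abs_nonneg _) ih hd

theorem apply_eq_of_fiberMass_eq {π : Q → ℚ} {t t' : Q → Q} {p : Q} (hp : π p ≠ 0)
    (heq : ∀ x ≠ p, t' x = t x) (hmass : fiberMass π t' = fiberMass π t) : t' p = t p := by
  by_contra hne
  have h := congrFun hmass (t p)
  simp only [fiberMass, sum_filter] at h
  rw [Fintype.sum_eq_add_sum_compl p, Fintype.sum_eq_add_sum_compl p,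
    sum_congr rfl fun x hx => by rw [heq x (by simpa using hx)]] at h
  exact hp (by simpa [hne] using h)

end FiberMass

section Automaton

variable {Q A : Type*} (δ : Q → A → Q)

noncomputable def letterMaps [Finite Q] : Finset (Q → Q) :=
  (Set.toFinite (Set.range fun a q => δ q a)).toFinset

theorem mem_letterMaps [Finite Q] (a : A) : (δ · a) ∈ letterMaps δ := by
  simp [letterMaps]

theorem reflTransGen_letterMaps_foldl [Finite Q] (u : List A) (p : Q) :
    Relation.ReflTransGen (fun x y => ∃ d ∈ letterMaps δ, d x = y) p (u.foldl δ p) := by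
  induction u generalizing p with
  | nil => exact .refl
  | cons a u ih => exact .head ⟨_, mem_letterMaps δ a, rfl⟩ (ih (δ p a))

theorem exists_word_fiberMass_append_eq [Fintype Q] [DecidableEq Q] {π : Q → ℚ}
    (hπ : IsStationaryWeight (letterMaps δ) π) :
    ∃ w : List A, ∀ u : List A,
      fiberMass π (fun x => (u ++ w).foldl δ x) = fiberMass π (fun x => w.foldl δ x) := by
  classical
  let S : Finset (Q → Q) := {t | ∃ u : List A, (fun x => u.foldl δ x) = t}
  obtain ⟨_, ht, hmax⟩ :=
    S.exists_max_image (fiberPotential π) ⟨id, mem_filter.mpr ⟨mem_univ _, [], rfl⟩⟩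
  obtain ⟨w, rfl⟩ := (mem_filter.mp ht).2
  refine ⟨w, fun u => ?_⟩
  induction u with
  | nil => rfl
  | cons a u ih =>
    refine (hπ.fiberMass_comp_eq_of_le (t := fun x => (u ++ w).foldl δ x) (fun d hd => ?_)
      (mem_letterMaps δ a)).trans ih
    obtain ⟨b, rfl⟩ : ∃ b, (δ · b) = d := by simpa [letterMaps] using hd
    simp only [fiberPotential, ih]
    exact hmax _ (mem_filter.mpr ⟨mem_univ _, b :: (u ++ w), rfl⟩)

theorem stable_foldl_of_forall_ne [Finite Q] (hsc : ∀ p q : Q, ∃ u : List A, u.foldl δ p = q)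
    {r : List A} {p : Q} (hr : ∀ x ≠ p, r.foldl δ x = x) : Stable δ p (r.foldl δ p) := by
  classical
  have := Fintype.ofFinite Q
  have : Nonempty Q := ⟨p⟩
  obtain ⟨π, hπ_pos, hπ⟩ := exists_pos_isStationaryWeight (letterMaps δ) fun x y => by
    obtain ⟨u, rfl⟩ := hsc x y
    exact reflTransGen_letterMaps_foldl δ u x
  obtain ⟨w, hw⟩ := exists_word_fiberMass_append_eq δ hπ
  intro u
  refine ⟨w, ?_⟩
  let t : Q → Q := fun x => (u ++ w).foldl δ x
  have hmass : fiberMass π (t ∘ fun x => r.foldl δ x) = fiberMass π t := by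
    have hcomp : t ∘ (fun x => r.foldl δ x) = fun x => (r ++ u ++ w).foldl δ x := by
      ext x; simp [t]
    rw [hcomp, hw, ← hw u]
  exact (apply_eq_of_fiberMass_eq (hπ_pos p).ne' (fun x hx => by simp [hr x hx]) hmass).symm

end Automaton

/-- If `A` is a strongly connected almost-group automaton, then its factor automaton
by the stability relation is a strongly connected group automaton: every letter acts
as a permutation of the stability classes (the induced action is surjective and
injective on classes), and the factor automaton is strongly connected. -/
theorem stmt_11 {Q A : Type*} [Finite Q] (δ : Q → A → Q) (a₀ : A) (p₀ : Q)
    (hperm : ∀ a : A, a ≠ a₀ → Function.Bijective fun q => δ q a)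
    (hcyc : Nat.card (Function.periodicPts fun q => δ q a₀) = Nat.card Q - 1)
    (hp₀ : p₀ ∉ Function.periodicPts fun q => δ q a₀)
    (hsc : ∀ p q : Q, ∃ u : List A, u.foldl δ p = q) :
    (∀ (a : A) (q : Q), ∃ p : Q, Stable δ (δ p a) q) ∧
      (∀ (a : A) (p q : Q), Stable δ (δ p a) (δ q a) → Stable δ p q) ∧
      (∀ p q : Q, ∃ u : List A, Stable δ (u.foldl δ p) q) := by
  have := Fintype.ofFinite Q
  obtain ⟨n, hn⟩ := Nat.exists_eq_succ_of_ne_zero (Fintype.card Q).factorial_ne_zero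
  have hperiodic : ∀ a x, x ∈ periodicPts (δ · a) → (δ · a)^[n + 1] x = x := fun a x hx => by
    have := isPeriodicPt_factorial_card_of_mem_periodicPts hx
    rwa [hn] at this
  have hret : ∀ a x, Stable δ ((δ · a)^[n + 1] x) x := by
    intro a x
    by_cases hx : x ∈ periodicPts (δ · a)
    · rw [hperiodic a x hx]; exact Stable.refl δ x
    obtain rfl : a = a₀ := by_contra fun ha => hx ((hperm a ha).injective.mem_periodicPts x)
    obtain rfl : x = p₀ := by simpa [periodicPts_eq_compl_singleton hcyc hp₀] using hx
    have hr : ∀ y ≠ x, (List.replicate (n + 1) a).foldl δ y = y := fun y hy => by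
      rw [List.foldl_replicate_eq_iterate,
        hperiodic a y (by simp [periodicPts_eq_compl_singleton hcyc hp₀, hy])]
    simpa [List.foldl_replicate_eq_iterate] using (stable_foldl_of_forall_ne δ hsc hr).symm
  exact ⟨fun a => Stable.exists_apply_of_iterate (hret a),
    fun a _ _ => Stable.of_apply_of_iterate (hret a),
    fun p q => (hsc p q).imp fun _ hu => by rw [hu]; exact Stable.refl δ q⟩
end

section
/- For n ≥ 3, every automaton in the family F_{n,k} is not synchronizing. -/
/-- For `n ≥ 3`, every automaton in the family `F_{n,k}` is not synchronizing.
Here the automaton has states `Fin n`, alphabet `Fin k` with almost-permutation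
letter `a₀` and dangling state `p₀`, and satisfies conditions (1)-(5) defining
`F_{n,k}`. -/
theorem stmt_14 (n k : ℕ) (hn : 3 ≤ n) (δ : Fin n → Fin k → Fin n)
    (a₀ : Fin k) (p₀ p q : Fin n)
    -- almost-group automaton: every letter other than `a₀` is a permutation
    (hperm : ∀ a : Fin k, a ≠ a₀ → Function.Bijective fun x => δ x a)
    -- (1) each letter `a ≠ a₀` either swaps `p` and `p₀` or fixes both
    (hp : p ≠ p₀)
    (h1 : ∀ a : Fin k, a ≠ a₀ →
      (δ p a = p₀ ∧ δ p₀ a = p) ∨ (δ p a = p ∧ δ p₀ a = p₀))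
    -- (2) at least one letter `a ≠ a₀` swaps `p` and `p₀`
    (h2 : ∃ a : Fin k, a ≠ a₀ ∧ δ p a = p₀ ∧ δ p₀ a = p)
    -- (3) `a₀` restricted to `Q \ {p₀}` is a permutation of `Q \ {p₀}` with `p·a₀ = q`
    (hq : q ≠ p ∧ q ≠ p₀)
    (h3 : Set.BijOn (fun x => δ x a₀) {x : Fin n | x ≠ p₀} {x : Fin n | x ≠ p₀})
    (h3' : δ p a₀ = q)
    -- (4) the image of the dangling state by `a₀` is `q`
    (h4 : δ p₀ a₀ = q)
    -- (5) deleting `p` and `p₀` and redirecting the `a₀`-preimage of `p` to `q`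
    -- yields a strongly connected group automaton on the remaining states
    (g : Fin n → Fin k → Fin n)
    (hg : ∀ x a, g x a = if a = a₀ ∧ δ x a₀ = p then q else δ x a)
    (h5a : ∀ a : Fin k,
      Set.BijOn (fun x => g x a) {x : Fin n | x ≠ p ∧ x ≠ p₀}
        {x : Fin n | x ≠ p ∧ x ≠ p₀})
    (h5b : ∀ x ∈ {x : Fin n | x ≠ p ∧ x ≠ p₀}, ∀ y ∈ {x : Fin n | x ≠ p ∧ x ≠ p₀},
      ∃ u : List (Fin k), u.foldl g x = y) :
    ¬ ∃ w : List (Fin k), ∀ x y : Fin n, w.foldl δ x = w.foldl δ y := by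
  rintro ⟨w, hw⟩
  -- Merge `p₀` into `p`: φ is the quotient map, δ' the quotient transition.
  set φ : Fin n → Fin n := fun x => if x = p₀ then p else x with hφdef
  set δ' : Fin n → Fin k → Fin n := fun x a => φ (δ x a) with hδ'def
  have hφS : ∀ x, φ x ≠ p₀ := by
    intro x
    simp only [hφdef]
    split
    · exact hp
    · assumption
  have hcomm : ∀ x a, φ (δ x a) = δ' (φ x) a := by
    intro x a
    by_cases hx : x = p₀
    · subst hx
      simp only [hδ'def, hφdef, if_pos rfl]
      by_cases ha : a = a₀
      · subst ha; rw [h4, h3']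
      · rcases h1 a ha with ⟨h₁, h₂⟩ | ⟨h₁, h₂⟩ <;>
          simp [h₁, h₂, hp, hp.symm]
    · simp only [hδ'def, hφdef, if_neg hx]
  have hinj : ∀ a, ∀ x y : Fin n, x ≠ p₀ → y ≠ p₀ → δ' x a = δ' y a → x = y := by
    intro a x y hx hy h
    by_cases ha : a = a₀
    · subst ha
      have hx' : δ x a ≠ p₀ := h3.mapsTo hx
      have hy' : δ y a ≠ p₀ := h3.mapsTo hy
      simp only [hδ'def, hφdef, if_neg hx', if_neg hy'] at h
      exact h3.injOn hx hy h
    · have hb := hperm a ha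
      simp only [hδ'def, hφdef] at h
      by_cases h1x : δ x a = p₀ <;> by_cases h1y : δ y a = p₀
      · exact hb.injective (h1x.trans h1y.symm)
      · rw [if_pos h1x, if_neg h1y] at h
        rcases h1 a ha with ⟨h₁, h₂⟩ | ⟨h₁, h₂⟩
        · exact absurd (hb.injective (h.symm.trans h₂.symm)) hy
        · exact absurd (hb.injective (h1x.trans h₂.symm)) hx
      · rw [if_neg h1x, if_pos h1y] at h
        rcases h1 a ha with ⟨h₁, h₂⟩ | ⟨h₁, h₂⟩
        · exact absurd (hb.injective (h.trans h₂.symm)) hx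
        · exact absurd (hb.injective (h1y.trans h₂.symm)) hy
      · rw [if_neg h1x, if_neg h1y] at h
        exact hb.injective h
  have hfold : ∀ (u : List (Fin k)) (x : Fin n),
      φ (u.foldl δ x) = u.foldl δ' (φ x) := by
    intro u
    induction u with
    | nil => intro x; rfl
    | cons a t ih =>
      intro x
      simp only [List.foldl_cons]
      rw [ih (δ x a), hcomm]
  have hfoldinj : ∀ (u : List (Fin k)) (x y : Fin n), x ≠ p₀ → y ≠ p₀ →
      u.foldl δ' x = u.foldl δ' y → x = y := by
    intro u
    induction u with
    | nil => intro x y _ _ h; exact h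
    | cons a t ih =>
      intro x y hx hy h
      simp only [List.foldl_cons] at h
      exact hinj a x y hx hy (ih _ _ (hφS _) (hφS _) h)
  have hqp : φ (w.foldl δ q) = φ (w.foldl δ p) := by rw [hw q p]
  rw [hfold, hfold] at hqp
  have hφq : φ q = q := if_neg hq.2
  have hφp : φ p = p := if_neg hp
  rw [hφq, hφp] at hqp
  exact hq.1 (hfoldinj w q p hq.2 hp hqp)
end

section
/- For integers n, b, ℓ ≥ 1 and s ≥ 0 with b(ℓ+1) + sℓ = n, one has n! / (b! · s! · (ℓ+1)!^b · ℓ!^s) ≥ (b+s)!^ℓ / (n² · s! · (b!)^{ℓ}) · b!^{ℓ+1}, and in particular n! / (b! · s! · (ℓ+1)!^b · ℓ!^s) ≥ (b+s)!^ℓ / (n² · s!). -/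
lemma aux_pow_le_descFactorial (k : ℕ) : ∀ b n : ℕ, k * b ≤ n →
    k ^ b * b.factorial ≤ n.descFactorial b := by
  intro b
  induction b with
  | zero => intro n _; simp
  | succ b ih =>
    intro n hn
    match n with
    | 0 =>
      have hk : k = 0 := (Nat.mul_eq_zero.mp (Nat.le_zero.mp hn)).resolve_right (by omega)
      simp [hk]
    | n + 1 =>
      rw [Nat.succ_descFactorial_succ]
      have h1 : k * b ≤ n := by
        rcases Nat.eq_zero_or_pos k with hk | hk
        · simp [hk]
        · nlinarith
      calc k ^ (b + 1) * (b + 1).factorial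
          = (k * (b + 1)) * (k ^ b * b.factorial) := by
            rw [Nat.factorial_succ]; ring
        _ ≤ (n + 1) * n.descFactorial b :=
            Nat.mul_le_mul hn (ih n h1)

lemma aux_fact_pow (m : ℕ) : ∀ ℓ : ℕ,
    ℓ.factorial ^ m * m.factorial ^ ℓ ≤ (ℓ * m).factorial := by
  intro ℓ
  induction ℓ with
  | zero => simp
  | succ ℓ ih =>
    have hid : ((ℓ * m) + m).choose m * (ℓ * m).factorial * m.factorial
        = ((ℓ * m) + m).factorial := Nat.add_choose_mul_factorial_mul_factorial _ _
    have hch : (ℓ + 1) ^ m ≤ ((ℓ * m) + m).choose m := by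
      have := aux_pow_le_descFactorial (ℓ + 1) m ((ℓ * m) + m) (by ring_nf; omega)
      rw [Nat.descFactorial_eq_factorial_mul_choose] at this
      have hm := Nat.factorial_pos m
      calc (ℓ + 1) ^ m = (ℓ + 1) ^ m * m.factorial / m.factorial := by
            rw [Nat.mul_div_cancel _ hm]
        _ ≤ m.factorial * ((ℓ * m) + m).choose m / m.factorial :=
            Nat.div_le_div_right this
        _ = ((ℓ * m) + m).choose m := by
            rw [Nat.mul_comm, Nat.mul_div_cancel _ hm]
    calc (ℓ + 1).factorial ^ m * m.factorial ^ (ℓ + 1)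
        = (ℓ + 1) ^ m * (ℓ.factorial ^ m * m.factorial ^ ℓ) * m.factorial := by
          rw [Nat.factorial_succ, Nat.mul_pow]; ring
      _ ≤ (ℓ + 1) ^ m * (ℓ * m).factorial * m.factorial := by
          gcongr
      _ ≤ ((ℓ * m) + m).choose m * (ℓ * m).factorial * m.factorial := by
          gcongr
      _ = ((ℓ + 1) * m).factorial := by rw [hid]; ring_nf

/-- For `b, ℓ ≥ 1`, `s ≥ 0` with `n = b(ℓ+1) + sℓ`:
`n! / (b! · s! · (ℓ+1)!^b · ℓ!^s) ≥ (b+s)!^ℓ / (n² · s!)`, stated multiplicatively as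
`(b+s)!^ℓ · b! · (ℓ+1)!^b · ℓ!^s ≤ n² · n!`. -/
theorem stmt_18 (n b s ℓ : ℕ) (hb : 1 ≤ b) (hl : 1 ≤ ℓ)
    (hn : n = b * (ℓ + 1) + s * ℓ) :
    (b + s).factorial ^ ℓ * b.factorial * (ℓ + 1).factorial ^ b * ℓ.factorial ^ s ≤
      n ^ 2 * n.factorial := by
  subst hn
  set m := b + s with hm
  set n := b * (ℓ + 1) + s * ℓ with hn
  have hnm : n = ℓ * m + b := by rw [hn, hm]; ring
  -- n! = choose(n,b) * (ℓ*m)! * b!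
  have hid : (ℓ * m + b).choose b * (ℓ * m).factorial * b.factorial
      = (ℓ * m + b).factorial := Nat.add_choose_mul_factorial_mul_factorial _ _
  have hA := aux_pow_le_descFactorial (ℓ + 1) b n (by rw [hn]; nlinarith)
  rw [Nat.descFactorial_eq_factorial_mul_choose] at hA
  have hB := aux_fact_pow m ℓ
  have key : m.factorial ^ ℓ * b.factorial * (ℓ + 1).factorial ^ b * ℓ.factorial ^ s
      ≤ n.factorial := by
    calc m.factorial ^ ℓ * b.factorial * (ℓ + 1).factorial ^ b * ℓ.factorial ^ s
        = ((ℓ + 1) ^ b * b.factorial) * (ℓ.factorial ^ m * m.factorial ^ ℓ) := by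
          rw [hm, Nat.factorial_succ, Nat.mul_pow, pow_add]; ring
      _ ≤ (b.factorial * n.choose b) * (ℓ * m).factorial := by
          gcongr
      _ = n.choose b * (ℓ * m).factorial * b.factorial := by ring
      _ = n.factorial := by rw [hnm]; exact hid
  have hn1 : 1 ≤ n := by rw [hn]; nlinarith
  calc m.factorial ^ ℓ * b.factorial * (ℓ + 1).factorial ^ b * ℓ.factorial ^ s
      ≤ n.factorial := key
    _ ≤ n ^ 2 * n.factorial := Nat.le_mul_of_pos_left _ (by positivity)
end

section
/- The number of group automata on state set Fin n over a k-letter alphabet that are not strongly connected is at most Z_{n,k} = Σ_{r=1}^{⌊n/2⌋} C(n,r) · (r! · (n-r)!)^k. -/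
/-!
If some state `q` cannot be reached from `p`, the set of states reachable from `p` is mapped
into itself by every letter, hence onto itself since letters act by permutations; so it and its
complement are both invariant, and one of them has at most `n / 2` elements. A permutation
preserving a set of size `r` is a pair of permutations of the set and of its complement, so
`(r! (n - r)!)^k` automata preserve a given such set; summing over the `C(n, r)` sets of each
size `1 ≤ r ≤ n / 2` gives the bound.
-/

open Equiv Finset Nat

namespace Equiv.Perm

variable {α : Type*}

theorem apply_mem_iff_of_forall_mem {σ : Perm α} {s : Finset α} (h : ∀ x ∈ s, σ x ∈ s)
    (x : α) : σ x ∈ s ↔ x ∈ s :=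
  ⟨fun hx => by simpa using perm_symm_on_of_perm_on_finset h hx, h x⟩

theorem card_forall_apply_mem_iff [Fintype α] [DecidableEq α] (s : Finset α) :
    Nat.card {σ : Perm α // ∀ x, σ x ∈ s ↔ x ∈ s} = (#s)! * (Fintype.card α - #s)! := by
  have hpres (σ : Perm α) : (∀ x, σ x ∈ s ↔ x ∈ s) ↔ (· ∈ s) ∘ σ = (· ∈ s) := by
    simp only [funext_iff, Function.comp_apply, eq_iff_iff]
  classical
  rw [Nat.card_eq_fintype_card, Fintype.card_congr (subtypeEquivRight hpres),
    DomMulAct.stabilizer_card, Fintype.prod_Prop]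
  simp only [eq_iff_iff, iff_true, iff_false]
  rw [Fintype.card_subtype_compl, Fintype.card_coe]

end Equiv.Perm

section GroupAutomaton

variable {α ι : Type*} [Fintype α]

theorem exists_invariant_of_not_reachable {π : ι → Perm α} {p q : α}
    (h : ¬ ∃ u : List ι, u.foldl (fun x a => π a x) p = q) :
    ∃ s : Finset α, p ∈ s ∧ q ∉ s ∧ ∀ a x, π a x ∈ s ↔ x ∈ s := by
  classical
  set reach : Finset α := {x | ∃ u : List ι, u.foldl (fun x a => π a x) p = x}
  refine ⟨reach, by simpa [reach] using ⟨[], rfl⟩, by simpa [reach] using h,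
    fun a => Perm.apply_mem_iff_of_forall_mem fun x hx => ?_⟩
  obtain ⟨u, rfl⟩ := (mem_filter.1 hx).2
  exact mem_filter.2 ⟨mem_univ _, u ++ [a], by simp⟩

theorem exists_small_invariant_of_not_stronglyConnected {π : ι → Perm α}
    (h : ¬ ∀ p q : α, ∃ u : List ι, u.foldl (fun x a => π a x) p = q) :
    ∃ s : Finset α, s.Nonempty ∧ #s ≤ Fintype.card α / 2 ∧ ∀ a x, π a x ∈ s ↔ x ∈ s := by
  classical
  simp only [not_forall] at h
  obtain ⟨p, q, hpq⟩ := h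
  obtain ⟨s, hp, hq, hs⟩ := exists_invariant_of_not_reachable hpq
  have hcompl := card_add_card_compl s
  by_cases hsmall : #s ≤ Fintype.card α / 2
  · exact ⟨s, ⟨p, hp⟩, hsmall, hs⟩
  · exact ⟨sᶜ, ⟨q, mem_compl.2 hq⟩, by omega, fun a x => by simp only [mem_compl, hs]⟩

theorem card_pi_perm_forall_apply_mem_iff [DecidableEq α] [Fintype ι] (s : Finset α) :
    Nat.card {π : ι → Perm α // ∀ a x, π a x ∈ s ↔ x ∈ s} =
      ((#s)! * (Fintype.card α - #s)!) ^ Fintype.card ι := by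
  rw [Nat.card_congr (subtypePiEquivPi (β := fun _ : ι => Perm α)
      (p := fun _ σ => ∀ x, σ x ∈ s ↔ x ∈ s)),
    Nat.card_pi, Fintype.prod_congr _ _ fun _ => Perm.card_forall_apply_mem_iff s,
    Finset.prod_const, Finset.card_univ]

end GroupAutomaton

/-- The number of group automata on `Fin n` over a `k`-letter alphabet that are not
strongly connected is at most `Σ_{r=1}^{⌊n/2⌋} C(n,r) · (r! · (n-r)!)^k`. -/
theorem stmt_19 (n k : ℕ) :
    Nat.card {π : Fin k → Equiv.Perm (Fin n) //
        ¬ ∀ p q : Fin n, ∃ u : List (Fin k), u.foldl (fun x a => π a x) p = q} ≤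
      ∑ r ∈ Finset.Icc 1 (n / 2),
        n.choose r * (r.factorial * (n - r).factorial) ^ k := by
  classical
  rw [Nat.card_eq_fintype_card, Fintype.card_subtype]
  calc _ ≤ #((Icc 1 (n / 2)).biUnion fun r => (powersetCard r univ).biUnion fun s =>
          {π : Fin k → Perm (Fin n) | ∀ a x, π a x ∈ s ↔ x ∈ s}) := by
        refine card_le_card fun π hπ => ?_
        obtain ⟨s, hne, hsmall, hs⟩ :=
          exists_small_invariant_of_not_stronglyConnected (mem_filter.1 hπ).2
        simp only [mem_biUnion, mem_powersetCard, mem_filter, mem_Icc]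
        exact ⟨#s, ⟨hne.card_pos, by simpa using hsmall⟩, s, ⟨subset_univ s, rfl⟩, mem_univ π, hs⟩
    _ ≤ ∑ r ∈ Icc 1 (n / 2), ∑ s ∈ powersetCard r (univ : Finset (Fin n)),
          #{π : Fin k → Perm (Fin n) | ∀ a x, π a x ∈ s ↔ x ∈ s} :=
        card_biUnion_le.trans (sum_le_sum fun r _ => card_biUnion_le)
    _ = _ := sum_congr rfl fun r _ => by
        rw [sum_congr rfl fun s hs => by
            rw [← Fintype.card_subtype, ← Nat.card_eq_fintype_card,
              card_pi_perm_forall_apply_mem_iff, (mem_powersetCard.1 hs).2],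
          sum_const, card_powersetCard, smul_eq_mul, Finset.card_univ, Fintype.card_fin,
          Fintype.card_fin]
end
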